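/- Let S be a completely positive linear map from operators on H_out ⊗ H_in to operators on K_out ⊗ K_in. Then S maps every Choi operator of a channel (E ≥ 0 with Tr_{H_out}[E] = I_{H_in}) to a Choi operator of a channel (Tr_{K_out}[S(E)] = I_{K_in}) if and only if there exists a completely positive trace-preserving map N_* from End(K_in) to End(H_in) such that the dual map S_* satisfies S_*(I_{K_out} ⊗ ρ) = I_{H_out} ⊗ N_*(ρ) for every operator ρ on K_in. -/

import Mathlib

open Matrix Kronecker BigOperators ComplexOrder

/-- Partial trace over the first tensor factor. -/
noncomputable def ptrFst {o i : Type*} [Fintype o] (M : Matrix (o × i) (o × i) ℂ) :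
    Matrix i i ℂ :=
  Matrix.of fun a b => ∑ k, M (k, a) (k, b)

/-- Partial trace over the second tensor factor. -/
noncomputable def ptrSnd {o i : Type*} [Fintype i] (M : Matrix (o × i) (o × i) ℂ) :
    Matrix o o ℂ :=
  Matrix.of fun a b => ∑ k, M (a, k) (b, k)

/-- Choi operator of a linear map between matrix algebras. -/
noncomputable def choi {i o : Type*} [Fintype i] [DecidableEq i]
    (E : Matrix i i ℂ →ₗ[ℂ] Matrix o o ℂ) : Matrix (o × i) (o × i) ℂ :=
  ∑ m, ∑ n, (E (Matrix.single m n 1)) ⊗ₖ (Matrix.single m n 1)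

/-- Complete positivity, expressed via existence of a Kraus decomposition
(equivalent to the usual definition in finite dimensions). -/
def IsCP {i o : Type*} [Fintype i] [Fintype o]
    (E : Matrix i i ℂ →ₗ[ℂ] Matrix o o ℂ) : Prop :=
  ∃ (k : ℕ) (K : Fin k → Matrix o i ℂ), ∀ X, E X = ∑ j, K j * X * (K j)ᴴ

/-!
Pairing with `1 ⊗ ρ` turns determinism of `S` into `tr (E * F_ρ) = tr ρ` for every channel Choi
operator `E`, where `F_ρ = S_*(1 ⊗ ρ)`. The channel Choi operators form an affine set directed by
the kernel of the partial trace: for Hermitian `X` in that kernel, `1/d + t X` is again a channel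
Choi operator (`d = dim H_out`, `t > 0` small). Hence `F_ρ` annihilates the kernel of the partial
trace, which forces `F_ρ = 1 ⊗ N_*(ρ)` with `N_*(ρ) = Tr_out F_ρ / d`. This `N_*` is completely
positive as a composite of completely positive maps (`S_*` has the adjoint Kraus operators of
`S`), and trace preserving by pairing with `1/d`. The converse is the same pairing read backwards.
-/

open scoped ComplexStarModule

section PartialTrace

variable {o i : Type*} [Fintype o]

def IsChannelChoi [Fintype i] [DecidableEq i] (E : Matrix (o × i) (o × i) ℂ) : Prop :=
  E.PosSemidef ∧ ptrFst E = 1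

lemma ptrFst_add (M N : Matrix (o × i) (o × i) ℂ) : ptrFst (M + N) = ptrFst M + ptrFst N := by
  ext a b; simp [ptrFst, Finset.sum_add_distrib]

lemma ptrFst_sub (M N : Matrix (o × i) (o × i) ℂ) : ptrFst (M - N) = ptrFst M - ptrFst N := by
  ext a b; simp [ptrFst, Finset.sum_sub_distrib]

lemma ptrFst_neg (M : Matrix (o × i) (o × i) ℂ) : ptrFst (-M) = -ptrFst M := by
  ext a b; simp [ptrFst]

lemma ptrFst_smul {R : Type*} [DistribSMul R ℂ] (c : R) (M : Matrix (o × i) (o × i) ℂ) :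
    ptrFst (c • M) = c • ptrFst M := by
  ext a b; simp [ptrFst, Finset.smul_sum]

lemma ptrFst_star (M : Matrix (o × i) (o × i) ℂ) : ptrFst (star M) = star (ptrFst M) := by
  ext a b; simp [ptrFst]

lemma ptrFst_realPart (M : Matrix (o × i) (o × i) ℂ) :
    ptrFst (ℜ M : Matrix (o × i) (o × i) ℂ) = ℜ (ptrFst M) := by
  simp [realPart_apply_coe, ptrFst_smul, ptrFst_add, ptrFst_star]

lemma ptrFst_imaginaryPart (M : Matrix (o × i) (o × i) ℂ) :
    ptrFst (ℑ M : Matrix (o × i) (o × i) ℂ) = ℑ (ptrFst M) := by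
  simp [imaginaryPart_apply_coe, ptrFst_neg, ptrFst_smul, ptrFst_sub, ptrFst_star]

variable [DecidableEq o]

lemma ptrFst_one_kronecker (ρ : Matrix i i ℂ) :
    ptrFst ((1 : Matrix o o ℂ) ⊗ₖ ρ) = Fintype.card o • ρ := by
  ext a b; simp [ptrFst, one_apply]

lemma trace_mul_one_kronecker [Fintype i] (M : Matrix (o × i) (o × i) ℂ) (ρ : Matrix i i ℂ) :
    (M * ((1 : Matrix o o ℂ) ⊗ₖ ρ)).trace = (ptrFst M * ρ).trace := by
  simp only [trace, diag_apply, mul_apply, kroneckerMap_apply, one_apply, ite_mul, one_mul,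
    zero_mul, mul_ite, mul_zero, Fintype.sum_prod_type, Finset.sum_ite_irrel,
    Finset.sum_const_zero, Finset.sum_ite_eq', Finset.mem_univ, ↓reduceIte, ptrFst, of_apply,
    Finset.sum_mul]
  rw [Finset.sum_comm]
  exact Finset.sum_congr rfl fun _ _ => Finset.sum_comm

lemma isChannelChoi_inv_card_smul_one [Fintype i] [DecidableEq i] [Nonempty o] :
    IsChannelChoi ((Fintype.card o : ℝ)⁻¹ • (1 : Matrix (o × i) (o × i) ℂ)) := by
  refine ⟨.smul .one (by positivity), ?_⟩
  rw [ptrFst_smul, ← one_kronecker_one, ptrFst_one_kronecker, ← Nat.cast_smul_eq_nsmul ℝ,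
    inv_smul_smul₀ (by positivity)]

noncomputable def ptrFstₗ : Matrix (o × i) (o × i) ℂ →ₗ[ℂ] Matrix i i ℂ where
  toFun := ptrFst
  map_add' := ptrFst_add
  map_smul' := ptrFst_smul

end PartialTrace

open scoped Matrix.Norms.L2Operator MatrixOrder in
lemma Matrix.IsHermitian.exists_posSemidef_smul_one_add {n : Type*} [Fintype n] [DecidableEq n]
    {X : Matrix n n ℂ} (hX : X.IsHermitian) :
    ∃ r : ℝ, 0 < r ∧ (r • (1 : Matrix n n ℂ) + X).PosSemidef := by
  refine ⟨‖X‖ + 1, by positivity, ?_⟩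
  have hle := IsSelfAdjoint.neg_algebraMap_norm_le_self hX
  rw [Matrix.le_iff, sub_neg_eq_add, Algebra.algebraMap_eq_smul_one] at hle
  rw [add_smul, one_smul, add_comm _ X, ← add_assoc]
  exact hle.add .one

section ChannelChoi

variable {o i : Type*} [Fintype o] [DecidableEq o] [Nonempty o] [Fintype i] [DecidableEq i]
  {F : Matrix (o × i) (o × i) ℂ} {c : ℂ}

lemma trace_mul_eq_zero_of_isHermitian_of_ptrFst_eq_zero
    (hF : ∀ E, IsChannelChoi E → (E * F).trace = c) {X : Matrix (o × i) (o × i) ℂ}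
    (hX : X.IsHermitian) (hX₀ : ptrFst X = 0) : (X * F).trace = 0 := by
  obtain ⟨r, hr, hpsd⟩ := hX.exists_posSemidef_smul_one_add
  set d : ℝ := (Fintype.card o : ℝ)
  have hE : IsChannelChoi (d⁻¹ • (1 : Matrix (o × i) (o × i) ℂ) + (r * d)⁻¹ • X) := by
    refine ⟨?_, ?_⟩
    · have : d⁻¹ • (1 : Matrix (o × i) (o × i) ℂ) + (r * d)⁻¹ • X = (r * d)⁻¹ • (r • 1 + X) := by
        rw [smul_add, smul_smul]
        congr 2
        field_simp
      exact this ▸ hpsd.smul (by positivity)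
    · rw [ptrFst_add, ptrFst_smul _ X, hX₀, smul_zero, add_zero]
      exact isChannelChoi_inv_card_smul_one.2
  have h := hF _ hE
  rw [add_mul, trace_add, hF _ isChannelChoi_inv_card_smul_one, smul_mul, trace_smul,
    add_eq_left, smul_eq_zero] at h
  exact h.resolve_left (by positivity)

lemma trace_mul_eq_zero_of_ptrFst_eq_zero (hF : ∀ E, IsChannelChoi E → (E * F).trace = c)
    {X : Matrix (o × i) (o × i) ℂ} (hX₀ : ptrFst X = 0) : (X * F).trace = 0 := by
  have hre : ptrFst (ℜ X : Matrix (o × i) (o × i) ℂ) = 0 := by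
    rw [ptrFst_realPart, hX₀, map_zero, ZeroMemClass.coe_zero]
  have him : ptrFst (ℑ X : Matrix (o × i) (o × i) ℂ) = 0 := by
    rw [ptrFst_imaginaryPart, hX₀, map_zero, ZeroMemClass.coe_zero]
  rw [← realPart_add_I_smul_imaginaryPart X, add_mul, trace_add, smul_mul, trace_smul,
    trace_mul_eq_zero_of_isHermitian_of_ptrFst_eq_zero hF (ℜ X).2 hre,
    trace_mul_eq_zero_of_isHermitian_of_ptrFst_eq_zero hF (ℑ X).2 him, smul_zero, add_zero]

theorem eq_one_kronecker_of_trace_mul_eq (hF : ∀ E, IsChannelChoi E → (E * F).trace = c) :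
    F = (1 : Matrix o o ℂ) ⊗ₖ ((Fintype.card o : ℝ)⁻¹ • ptrFst F) := by
  refine ext_iff_trace_mul_left.2 fun A => ?_
  set d : ℝ := (Fintype.card o : ℝ)
  have hker : ptrFst (A - d⁻¹ • ((1 : Matrix o o ℂ) ⊗ₖ ptrFst A)) = 0 := by
    rw [ptrFst_sub, ptrFst_smul, ptrFst_one_kronecker, ← Nat.cast_smul_eq_nsmul ℝ,
      inv_smul_smul₀ (by positivity), sub_self]
  have h := trace_mul_eq_zero_of_ptrFst_eq_zero hF hker
  rw [sub_mul, trace_sub, sub_eq_zero] at h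
  rw [h, smul_mul, trace_smul, kronecker_smul, Matrix.mul_smul, trace_smul, trace_mul_comm,
    trace_mul_one_kronecker, trace_mul_one_kronecker, trace_mul_comm]

end ChannelChoi

section CompletePositivity

variable {i o : Type*} [Fintype i] [Fintype o]

lemma isCP_of_kraus {ι : Type*} [Fintype ι] {E : Matrix i i ℂ →ₗ[ℂ] Matrix o o ℂ}
    (K : ι → Matrix o i ℂ) (h : ∀ X, E X = ∑ j, K j * X * (K j)ᴴ) : IsCP E := by
  refine ⟨Fintype.card ι, fun n => K ((Fintype.equivFin ι).symm n), fun X => ?_⟩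
  rw [h]
  exact Fintype.sum_equiv (Fintype.equivFin ι) _ _ fun j => by simp

lemma IsCP.comp {m : Type*} [Fintype m] {E : Matrix o o ℂ →ₗ[ℂ] Matrix m m ℂ}
    {F : Matrix i i ℂ →ₗ[ℂ] Matrix o o ℂ} (hE : IsCP E) (hF : IsCP F) : IsCP (E ∘ₗ F) := by
  obtain ⟨k, K, hK⟩ := hE
  obtain ⟨l, L, hL⟩ := hF
  refine isCP_of_kraus (fun jl : Fin k × Fin l => K jl.1 * L jl.2) fun X => ?_
  simp only [LinearMap.comp_apply, hK, hL, Matrix.mul_sum, Matrix.sum_mul, conjTranspose_mul,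
    Matrix.mul_assoc, Fintype.sum_prod_type]

lemma IsCP.smul {E : Matrix i i ℂ →ₗ[ℂ] Matrix o o ℂ} (hE : IsCP E) {r : ℝ} (hr : 0 ≤ r) :
    IsCP (r • E) := by
  obtain ⟨k, K, hK⟩ := hE
  refine ⟨k, fun j => (√r : ℂ) • K j, fun X => ?_⟩
  have hsq : (√r : ℂ) * (√r : ℂ) = r := by rw [← Complex.ofReal_mul, Real.mul_self_sqrt hr]
  simp only [LinearMap.smul_apply, hK, Finset.smul_sum, smul_mul, Matrix.mul_smul,
    conjTranspose_smul, Complex.star_def, Complex.conj_ofReal, smul_smul, hsq]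
  rfl

lemma IsCP.dual {E : Matrix i i ℂ →ₗ[ℂ] Matrix o o ℂ} {Ed : Matrix o o ℂ →ₗ[ℂ] Matrix i i ℂ}
    (hE : IsCP E) (hdual : ∀ A B, (E A * B).trace = (A * Ed B).trace) : IsCP Ed := by
  obtain ⟨k, K, hK⟩ := hE
  refine ⟨k, fun j => (K j)ᴴ, fun B => ext_iff_trace_mul_left.2 fun A => ?_⟩
  rw [← hdual, hK, Finset.sum_mul, trace_sum, Finset.mul_sum, trace_sum]
  refine Finset.sum_congr rfl fun j _ => ?_
  simp only [conjTranspose_conjTranspose, Matrix.mul_assoc]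
  rw [trace_mul_comm]
  simp only [Matrix.mul_assoc]

variable [DecidableEq i] [DecidableEq o]

lemma isCP_ptrFstₗ : IsCP (ptrFstₗ : Matrix (o × i) (o × i) ℂ →ₗ[ℂ] Matrix i i ℂ) := by
  refine isCP_of_kraus (fun b : o => Matrix.of fun x p => if p = (b, x) then 1 else 0) fun M => ?_
  ext x x'
  simp [ptrFstₗ, ptrFst, mul_apply, Matrix.sum_apply]

lemma isCP_one_kronecker (m : Type*) [Fintype m] [DecidableEq m] :
    IsCP (kroneckerBilinear (R := ℂ) (1 : Matrix m m ℂ) : Matrix i i ℂ →ₗ[ℂ] _) := by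
  refine isCP_of_kraus
    (fun a : m => (Matrix.of fun p x => if p = (a, x) then 1 else 0 : Matrix (m × i) i ℂ))
    fun ρ => show 1 ⊗ₖ ρ = _ from ?_
  ext ⟨c, y⟩ ⟨c', y'⟩
  simp [mul_apply, Matrix.sum_apply, one_apply, ite_and, eq_comm (a := c'),
    apply_ite (starRingEnd ℂ)]

end CompletePositivity

noncomputable def marginalMap {i o ki ko : Type*} [Fintype o] [DecidableEq ko]
    (Sd : Matrix (ko × ki) (ko × ki) ℂ →ₗ[ℂ] Matrix (o × i) (o × i) ℂ) :
    Matrix ki ki ℂ →ₗ[ℂ] Matrix i i ℂ :=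
  (Fintype.card o : ℝ)⁻¹ • (ptrFstₗ ∘ₗ Sd ∘ₗ kroneckerBilinear (1 : Matrix ko ko ℂ))

lemma IsCP.marginalMap {i o ki ko : Type*} [Fintype i] [DecidableEq i] [Fintype o] [DecidableEq o]
    [Fintype ki] [DecidableEq ki] [Fintype ko] [DecidableEq ko]
    {Sd : Matrix (ko × ki) (ko × ki) ℂ →ₗ[ℂ] Matrix (o × i) (o × i) ℂ} (hSd : IsCP Sd) :
    IsCP (_root_.marginalMap Sd) :=
  ((isCP_ptrFstₗ.comp hSd).comp (isCP_one_kronecker ko)).smul (by positivity)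

theorem deterministic_iff_semicausal_general {i o ki ko : Type*}
    [Fintype i] [DecidableEq i] [Fintype o] [DecidableEq o] [Nonempty o]
    [Fintype ki] [DecidableEq ki] [Fintype ko] [DecidableEq ko]
    (S : Matrix (o × i) (o × i) ℂ →ₗ[ℂ] Matrix (ko × ki) (ko × ki) ℂ)
    (hS : IsCP S)
    (Sd : Matrix (ko × ki) (ko × ki) ℂ →ₗ[ℂ] Matrix (o × i) (o × i) ℂ)
    (hdual : ∀ (A : Matrix (o × i) (o × i) ℂ) (B : Matrix (ko × ki) (ko × ki) ℂ),
      (S A * B).trace = (A * Sd B).trace) :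
    (∀ E : Matrix (o × i) (o × i) ℂ, E.PosSemidef → ptrFst E = 1 →
        ptrFst (S E) = 1) ↔
    (∃ N : Matrix ki ki ℂ →ₗ[ℂ] Matrix i i ℂ, IsCP N ∧
      (∀ ρ : Matrix ki ki ℂ, (N ρ).trace = ρ.trace) ∧
      ∀ ρ : Matrix ki ki ℂ,
        Sd ((1 : Matrix ko ko ℂ) ⊗ₖ ρ) = (1 : Matrix o o ℂ) ⊗ₖ N ρ) := by
  constructor
  · intro hdet
    have hpair : ∀ ρ E, IsChannelChoi E → (E * Sd ((1 : Matrix ko ko ℂ) ⊗ₖ ρ)).trace = ρ.trace :=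
      fun ρ E hE => by rw [← hdual, trace_mul_one_kronecker, hdet E hE.1 hE.2, Matrix.one_mul]
    have hsemi : ∀ ρ, Sd ((1 : Matrix ko ko ℂ) ⊗ₖ ρ) = 1 ⊗ₖ marginalMap Sd ρ :=
      fun ρ => eq_one_kronecker_of_trace_mul_eq (hpair ρ)
    refine ⟨marginalMap Sd, (hS.dual hdual).marginalMap, fun ρ => ?_, hsemi⟩
    rw [← hpair ρ _ isChannelChoi_inv_card_smul_one, hsemi, trace_mul_one_kronecker,
      isChannelChoi_inv_card_smul_one.2, Matrix.one_mul]
  · rintro ⟨N, -, hN_trace, hN⟩ E - hE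
    refine ext_iff_trace_mul_left.2 fun ρ => ?_
    rw [Matrix.mul_one, trace_mul_comm, ← trace_mul_one_kronecker, hdual, hN,
      trace_mul_one_kronecker, hE, Matrix.one_mul, hN_trace]

/-- A CP supermap `S` is deterministic (sends channel Choi operators to
channel Choi operators) iff its Hilbert–Schmidt dual `S_*` satisfies
`S_*(I ⊗ ρ) = I ⊗ N_*(ρ)` for some CP trace-preserving map `N_*`. -/
theorem deterministic_iff_semicausal {i o ki ko : Type*}
    [Fintype i] [DecidableEq i] [Fintype o] [DecidableEq o] [Nonempty o]
    [Fintype ki] [DecidableEq ki] [Fintype ko] [DecidableEq ko] [Nonempty ko]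
    (S : Matrix (o × i) (o × i) ℂ →ₗ[ℂ] Matrix (ko × ki) (ko × ki) ℂ)
    (hS : IsCP S)
    (Sd : Matrix (ko × ki) (ko × ki) ℂ →ₗ[ℂ] Matrix (o × i) (o × i) ℂ)
    (hdual : ∀ (A : Matrix (o × i) (o × i) ℂ) (B : Matrix (ko × ki) (ko × ki) ℂ),
      (S A * B).trace = (A * Sd B).trace) :
    (∀ E : Matrix (o × i) (o × i) ℂ, E.PosSemidef → ptrFst E = 1 →
        ptrFst (S E) = 1) ↔
    (∃ N : Matrix ki ki ℂ →ₗ[ℂ] Matrix i i ℂ, IsCP N ∧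
      (∀ ρ : Matrix ki ki ℂ, (N ρ).trace = ρ.trace) ∧
      ∀ ρ : Matrix ki ki ℂ,
        Sd ((1 : Matrix ko ko ℂ) ⊗ₖ ρ) = (1 : Matrix o o ℂ) ⊗ₖ N ρ) :=
  deterministic_iff_semicausal_general S hS Sd hdual
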